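/- arXiv:2101.12005 — 2 statements merged into one kernel-verified Lean document; each statement's English description precedes it below -/
import Mathlib

section
/- Let n be odd. For (n−1)/2 < k ≤ n−2, the vector b_k = v_k + c₂ v_{n−1−k} with c₂ = −(sin²(kπh/2) λ_k(S_J^m))/(cos²(kπh/2) λ_{n−1−k}(S_J^m)) satisfies R^{TG} b_k = 0, where R^{TG} = (I − I_{2h}^h (A^{2h})^{-1} I_h^{2h} A^h) S_J^m, assuming λ_{n−1−k}(S_J^m) ≠ 0. -/
open Real Matrix

/-- 1D discrete Laplacian `(1/h^2) tridiag(-1,2,-1)` with `h = 1/(n-1)`. -/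
noncomputable def lap (n : ℕ) : Matrix (Fin (n-2)) (Fin (n-2)) ℝ :=
  Matrix.of fun i j =>
    ((n : ℝ) - 1)^2 *
      (if i = j then 2 else if i.val + 1 = j.val ∨ j.val + 1 = i.val then -1 else 0)

/-- Fine-grid Fourier mode `v_k(j) = sin (j k π/(n-1))`, `j = 1, …, n-2`. -/
noncomputable def vmode (n k : ℕ) : Fin (n-2) → ℝ :=
  fun j => Real.sin ((j.val + 1) * k * Real.pi / ((n : ℝ) - 1))

/-- Eigenvalue `λ_k = (4/h²) sin²(kπ/(2(n-1)))`. -/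
noncomputable def lamk (n k : ℕ) : ℝ :=
  4 * ((n : ℝ) - 1)^2 * Real.sin (k * Real.pi / (2 * ((n : ℝ) - 1)))^2

/-- Angle `kπh/2 = kπ/(2(n-1))`. -/
noncomputable def theta (n k : ℕ) : ℝ := k * Real.pi / (2 * ((n : ℝ) - 1))

/-- Linear interpolation (prolongation) matrix: column `j` has entries
`1/2, 1, 1/2` in rows `2j-1, 2j, 2j+1` (1-based indexing). -/
noncomputable def interp (n : ℕ) : Matrix (Fin (n-2)) (Fin ((n-3)/2)) ℝ :=
  Matrix.of fun i j =>
    if i.val + 1 = 2 * j.val + 1 then 1/2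
    else if i.val + 1 = 2 * j.val + 2 then 1
    else if i.val + 1 = 2 * j.val + 3 then 1/2 else 0

/-- Coarse-grid Fourier mode `v_k^{2h}(j) = sin (2 j k π/(n-1))`. -/
noncomputable def vcoarse (n k : ℕ) : Fin ((n-3)/2) → ℝ :=
  fun j => Real.sin (2 * (j.val + 1) * k * Real.pi / ((n : ℝ) - 1))

/-- Galerkin coarse-grid matrix `A^{2h} = I_h^{2h} A^h I_{2h}^h`. -/
noncomputable def coarseA (n : ℕ) : Matrix (Fin ((n-3)/2)) (Fin ((n-3)/2)) ℝ :=
  (interp n)ᵀ * lap n * interp n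

/-- Weighted-Jacobi iteration matrix `R_J^ω = I - ω D⁻¹ A` where `D = diag A`. -/
noncomputable def jacobi (n : ℕ) (ω : ℝ) : Matrix (Fin (n-2)) (Fin (n-2)) ℝ :=
  1 - ω • ((Matrix.diagonal fun i => lap n i i)⁻¹ * lap n)

/-- Two-grid iteration matrix with pre-smoother `S`. -/
noncomputable def twogrid (n : ℕ) (S : Matrix (Fin (n-2)) (Fin (n-2)) ℝ) :
    Matrix (Fin (n-2)) (Fin (n-2)) ℝ :=
  (1 - interp n * (coarseA n)⁻¹ * (interp n)ᵀ * lap n) * S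

section Aux

lemma sum_ite_one {M : ℕ} (v : Fin M → ℝ) (m : ℕ) :
    (∑ j : Fin M, if m = j.val + 1 then v j else 0)
      = if h : 1 ≤ m ∧ m - 1 < M then v ⟨m - 1, h.2⟩ else 0 := by
  split_ifs with h
  · refine (Finset.sum_eq_single (⟨m - 1, h.2⟩ : Fin M) ?_ ?_).trans ?_
    · intro b _ hb
      rw [if_neg]
      intro hc
      exact hb (by ext; simp; omega)
    · simp
    · rw [if_pos (by simp; omega)]
  · apply Finset.sum_eq_zero
    intro j _
    rw [if_neg]
    have := j.isLt
    omega

lemma sum_ite_two {M : ℕ} (v : Fin M → ℝ) (c m : ℕ) :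
    (∑ j : Fin M, if m = 2 * j.val + c then v j else 0)
      = if h : c ≤ m ∧ (m - c) % 2 = 0 ∧ (m - c)/2 < M then v ⟨(m - c)/2, h.2.2⟩ else 0 := by
  split_ifs with h
  · refine (Finset.sum_eq_single (⟨(m - c)/2, h.2.2⟩ : Fin M) ?_ ?_).trans ?_
    · intro b _ hb
      rw [if_neg]
      intro hc
      exact hb (by ext; simp; omega)
    · simp
    · rw [if_pos (by simp; omega)]
  · apply Finset.sum_eq_zero
    intro j _
    rw [if_neg]
    have := j.isLt
    omega

lemma sin_even_pi_sub (q : ℕ) (x : ℝ) :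
    Real.sin ((2*q : ℕ) * Real.pi - x) = -Real.sin x := by
  rw [Real.sin_sub, show ((2*q : ℕ):ℝ) * Real.pi = q * (2*Real.pi) by push_cast; ring,
    Real.cos_nat_mul_two_pi]
  rw [show (q:ℝ) * (2*Real.pi) = ((2*q : ℕ):ℝ) * Real.pi by push_cast; ring,
    Real.sin_nat_mul_pi]
  ring

lemma sin_odd_pi_sub (q : ℕ) (x : ℝ) :
    Real.sin ((2*q+1 : ℕ) * Real.pi - x) = Real.sin x := by
  rw [show ((2*q+1 : ℕ):ℝ) * Real.pi - x = (2*q : ℕ) * Real.pi - (x - Real.pi) by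
    push_cast; ring, sin_even_pi_sub]
  rw [show x - Real.pi = -(Real.pi - x) by ring, Real.sin_neg, Real.sin_pi_sub]
  ring

end Aux

section Eigen

variable (n k : ℕ)

lemma lap_eigen (hn : 3 ≤ n) :
    (lap n).mulVec (vmode n k) = lamk n k • vmode n k := by
  have hc : ((n:ℝ) - 1) ≠ 0 := by
    have : (3:ℝ) ≤ (n:ℝ) := by exact_mod_cast hn
    linarith
  set a : ℝ := k * Real.pi / ((n:ℝ) - 1) with ha
  set g : ℕ → ℝ := fun p => Real.sin (p * a) with hgdef
  have hvg : ∀ j : Fin (n-2), vmode n k j = g (j.val+1) := by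
    intro j
    simp only [vmode, hgdef, ha]
    congr 1
    push_cast
    ring
  have hv' : ∀ (m : ℕ) (h : m < n-2), vmode n k ⟨m, h⟩ = g (m+1) :=
    fun m h => hvg ⟨m, h⟩
  have hg0 : g 0 = 0 := by simp [hgdef]
  have hgN : g (n-1) = 0 := by
    have h1 : ((n-1 : ℕ):ℝ) * a = k * Real.pi := by
      rw [ha]
      push_cast [Nat.cast_sub (by omega : 1 ≤ n)]
      field_simp
    simp only [hgdef]
    rw [h1, Real.sin_nat_mul_pi]
  funext i
  have hi := i.isLt
  have key : ∀ j : Fin (n-2), lap n i j * vmode n k j =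
      ((n:ℝ)-1)^2 * (2*(if i.val+1 = j.val+1 then vmode n k j else 0)
       - (if i.val+2 = j.val+1 then vmode n k j else 0)
       - (if i.val = j.val+1 then vmode n k j else 0)) := by
    intro j
    simp only [lap, Matrix.of_apply, Fin.ext_iff]
    split_ifs <;> first | ring1 | (exfalso; omega)
  have S1 : (∑ j : Fin (n-2), if i.val+1 = j.val+1 then vmode n k j else 0)
      = g (i.val+1) := by
    rw [sum_ite_one, dif_pos (⟨by omega, by omega⟩ : 1 ≤ i.val+1 ∧ i.val+1-1 < n-2), hv']
    congr 1 <;> omega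
  have S2 : (∑ j : Fin (n-2), if i.val+2 = j.val+1 then vmode n k j else 0)
      = g (i.val+2) := by
    rw [sum_ite_one]
    by_cases h : i.val + 1 < n - 2
    · rw [dif_pos (⟨by omega, by omega⟩ : 1 ≤ i.val+2 ∧ i.val+2-1 < n-2), hv']
      congr 1 <;> omega
    · rw [dif_neg (by omega), show i.val+2 = n-1 by omega, hgN]
  have S3 : (∑ j : Fin (n-2), if i.val = j.val+1 then vmode n k j else 0)
      = g i.val := by
    rw [sum_ite_one]
    by_cases h : 1 ≤ i.val
    · rw [dif_pos (⟨by omega, by omega⟩ : 1 ≤ i.val ∧ i.val-1 < n-2), hv']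
      congr 1 <;> omega
    · rw [dif_neg (by omega), show i.val = 0 by omega, hg0]
  have hsum : (lap n).mulVec (vmode n k) i
      = ((n:ℝ)-1)^2 * (2 * g (i.val+1) - g (i.val+2) - g i.val) := by
    rw [Matrix.mulVec, dotProduct,
      Finset.sum_congr rfl (fun j _ => key j), ← Finset.mul_sum]
    congr 1
    rw [Finset.sum_sub_distrib, Finset.sum_sub_distrib, ← Finset.mul_sum, S1, S2, S3]
  rw [hsum, Pi.smul_apply, smul_eq_mul, hvg]
  have e1 : (i.val:ℝ) * a = ((i.val:ℝ)+1) * a - a := by ring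
  have e2 : ((i.val+2:ℕ):ℝ) * a = ((i.val:ℝ)+1) * a + a := by push_cast; ring
  have hgi : g i.val + g (i.val+2) = 2 * g (i.val+1) * Real.cos a := by
    simp only [hgdef]
    rw [e1, e2, Real.sin_add, Real.sin_sub]
    push_cast
    ring
  have hcos : Real.cos a = 1 - 2 * Real.sin (a/2)^2 := by
    have h2 := Real.cos_two_mul (a/2)
    rw [show 2*(a/2) = a by ring] at h2
    have h3 := Real.sin_sq_add_cos_sq (a/2)
    linarith
  have hlam : lamk n k = 4 * ((n:ℝ)-1)^2 * Real.sin (a/2)^2 := by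
    have h4 : a/2 = k * Real.pi / (2*((n:ℝ)-1)) := by
      rw [ha, div_div, mul_comm ((n:ℝ)-1) 2]
    rw [lamk, h4]
  rw [hlam]
  linear_combination (-(((n:ℝ)-1)^2)) * hgi + (-(2*((n:ℝ)-1)^2 * g (i.val+1))) * hcos

lemma restrict_eigen (hn : 3 ≤ n) (hodd : Odd n) :
    ((interp n)ᵀ).mulVec (vmode n k) = (2 * Real.cos (theta n k)^2) • vcoarse n k := by
  have hM : 2*((n-3)/2) = n-3 := by obtain ⟨t, ht⟩ := hodd; omega
  have hc : ((n:ℝ) - 1) ≠ 0 := by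
    have : (3:ℝ) ≤ (n:ℝ) := by exact_mod_cast hn
    linarith
  set a : ℝ := k * Real.pi / ((n:ℝ) - 1) with ha
  set g : ℕ → ℝ := fun p => Real.sin (p * a) with hgdef
  have hv' : ∀ (m : ℕ) (h : m < n-2), vmode n k ⟨m, h⟩ = g (m+1) := by
    intro m h
    simp only [vmode, hgdef, ha]
    congr 1
    push_cast
    ring
  funext j
  have hj := j.isLt
  have key : ∀ i : Fin (n-2), interp n i j * vmode n k i =
      (1/2)*(if 2*j.val+1 = i.val+1 then vmode n k i else 0)
      + (if 2*j.val+2 = i.val+1 then vmode n k i else 0)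
      + (1/2)*(if 2*j.val+3 = i.val+1 then vmode n k i else 0) := by
    intro i
    simp only [interp, Matrix.of_apply]
    split_ifs <;> first | ring1 | (exfalso; omega)
  have T1 : (∑ i : Fin (n-2), if 2*j.val+1 = i.val+1 then vmode n k i else 0)
      = g (2*j.val+1) := by
    rw [sum_ite_one, dif_pos (⟨by omega, by omega⟩ : 1 ≤ 2*j.val+1 ∧ 2*j.val+1-1 < n-2), hv']
    congr 1 <;> omega
  have T2 : (∑ i : Fin (n-2), if 2*j.val+2 = i.val+1 then vmode n k i else 0)
      = g (2*j.val+2) := by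
    rw [sum_ite_one, dif_pos (⟨by omega, by omega⟩ : 1 ≤ 2*j.val+2 ∧ 2*j.val+2-1 < n-2), hv']
    congr 1 <;> omega
  have T3 : (∑ i : Fin (n-2), if 2*j.val+3 = i.val+1 then vmode n k i else 0)
      = g (2*j.val+3) := by
    rw [sum_ite_one, dif_pos (⟨by omega, by omega⟩ : 1 ≤ 2*j.val+3 ∧ 2*j.val+3-1 < n-2), hv']
    congr 1 <;> omega
  have hsum : ((interp n)ᵀ).mulVec (vmode n k) j
      = (1/2) * g (2*j.val+1) + g (2*j.val+2) + (1/2) * g (2*j.val+3) := by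
    rw [Matrix.mulVec, dotProduct]
    simp only [Matrix.transpose_apply]
    rw [Finset.sum_congr rfl (fun i _ => key i), Finset.sum_add_distrib,
      Finset.sum_add_distrib, ← Finset.mul_sum, ← Finset.mul_sum, T1, T2, T3]
  rw [hsum, Pi.smul_apply, smul_eq_mul]
  have e1 : ((2*j.val+1 : ℕ):ℝ) * a = ((2*j.val+2 : ℕ):ℝ) * a - a := by push_cast; ring
  have e3 : ((2*j.val+3 : ℕ):ℝ) * a = ((2*j.val+2 : ℕ):ℝ) * a + a := by push_cast; ring
  have hgi : g (2*j.val+1) + g (2*j.val+3)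
      = 2 * g (2*j.val+2) * Real.cos a := by
    simp only [hgdef]
    rw [e1, e3, Real.sin_add, Real.sin_sub]
    ring
  have hcos : Real.cos a = 2 * Real.cos (a/2)^2 - 1 := by
    have h2 := Real.cos_two_mul (a/2)
    rw [show 2*(a/2) = a by ring] at h2
    linarith
  have hth : theta n k = a/2 := by
    rw [theta, ha, div_div, mul_comm ((n:ℝ)-1) 2]
  have hvc : vcoarse n k j = g (2*j.val+2) := by
    simp only [vcoarse, hgdef, ha]
    congr 1
    push_cast
    ring
  rw [hth, hvc]
  linear_combination (1/2) * hgi + g (2*j.val+2) * hcos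

lemma vcoarse_flip (hn : 3 ≤ n) (hk : k ≤ n-1) :
    vcoarse n (n-1-k) = -vcoarse n k := by
  have hc : ((n:ℝ) - 1) ≠ 0 := by
    have : (3:ℝ) ≤ (n:ℝ) := by exact_mod_cast hn
    linarith
  funext j
  simp only [vcoarse, Pi.neg_apply]
  have harg : 2 * ((j.val:ℝ) + 1) * ((n-1-k : ℕ):ℝ) * Real.pi / ((n:ℝ) - 1)
      = ((2*(j.val+1) : ℕ):ℝ) * Real.pi
        - 2 * ((j.val:ℝ) + 1) * k * Real.pi / ((n:ℝ) - 1) := by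
    push_cast [Nat.cast_sub (by omega : k ≤ n-1), Nat.cast_sub (by omega : 1 ≤ n)]
    field_simp
  rw [harg, show (2*(j.val+1) : ℕ) = 2*(j.val+1) by rfl, sin_even_pi_sub]

lemma theta_flip (hn : 3 ≤ n) (hk : k ≤ n-1) :
    theta n (n-1-k) = Real.pi/2 - theta n k := by
  have hc : ((n:ℝ) - 1) ≠ 0 := by
    have : (3:ℝ) ≤ (n:ℝ) := by exact_mod_cast hn
    linarith
  simp only [theta]
  push_cast [Nat.cast_sub (by omega : k ≤ n-1), Nat.cast_sub (by omega : 1 ≤ n)]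
  field_simp

lemma prolong_eigen (hn : 3 ≤ n) (hodd : Odd n) (hk : k ≤ n-1) :
    (interp n).mulVec (vcoarse n k)
      = (Real.cos (theta n k)^2) • vmode n k
        + (-(Real.sin (theta n k)^2)) • vmode n (n-1-k) := by
  have hM : 2*((n-3)/2) = n-3 := by obtain ⟨t, ht⟩ := hodd; omega
  have hc : ((n:ℝ) - 1) ≠ 0 := by
    have : (3:ℝ) ≤ (n:ℝ) := by exact_mod_cast hn
    linarith
  set a : ℝ := k * Real.pi / ((n:ℝ) - 1) with ha
  set g : ℕ → ℝ := fun p => Real.sin (p * a) with hgdef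
  have hg0 : g 0 = 0 := by simp [hgdef]
  have hgN : g (n-1) = 0 := by
    have h1 : ((n-1 : ℕ):ℝ) * a = k * Real.pi := by
      rw [ha]
      push_cast [Nat.cast_sub (by omega : 1 ≤ n)]
      field_simp
    simp only [hgdef]
    rw [h1, Real.sin_nat_mul_pi]
  have uc' : ∀ (m : ℕ) (h : m < (n-3)/2), vcoarse n k ⟨m, h⟩ = g (2*m+2) := by
    intro m h
    simp only [vcoarse, hgdef, ha]
    congr 1
    push_cast
    ring
  have hvg : ∀ i : Fin (n-2), vmode n k i = g (i.val+1) := by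
    intro i
    simp only [vmode, hgdef, ha]
    congr 1
    push_cast
    ring
  have hth : theta n k = a/2 := by
    rw [theta, ha, div_div, mul_comm ((n:ℝ)-1) 2]
  have hcos : Real.cos a = 2 * Real.cos (a/2)^2 - 1 := by
    have h2 := Real.cos_two_mul (a/2)
    rw [show 2*(a/2) = a by ring] at h2
    linarith
  have hpyth := Real.sin_sq_add_cos_sq (a/2)
  funext i
  have hi := i.isLt
  -- value of (n-1-k) mode at i
  have hvk' : vmode n (n-1-k) i
      = Real.sin (((i.val+1 : ℕ):ℝ) * Real.pi - ((i.val+1 : ℕ):ℝ) * a) := by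
    simp only [vmode, ha]
    congr 1
    push_cast [Nat.cast_sub (by omega : k ≤ n-1), Nat.cast_sub (by omega : 1 ≤ n)]
    field_simp
  have key : ∀ j : Fin ((n-3)/2), interp n i j * vcoarse n k j =
      (1/2)*(if i.val+1 = 2*j.val+1 then vcoarse n k j else 0)
      + (if i.val+1 = 2*j.val+2 then vcoarse n k j else 0)
      + (1/2)*(if i.val+1 = 2*j.val+3 then vcoarse n k j else 0) := by
    intro j
    simp only [interp, Matrix.of_apply]
    split_ifs <;> first | ring1 | (exfalso; omega)
  have hsum0 : (interp n).mulVec (vcoarse n k) i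
      = (1/2) * (∑ j : Fin ((n-3)/2), if i.val+1 = 2*j.val+1 then vcoarse n k j else 0)
      + (∑ j : Fin ((n-3)/2), if i.val+1 = 2*j.val+2 then vcoarse n k j else 0)
      + (1/2) * (∑ j : Fin ((n-3)/2), if i.val+1 = 2*j.val+3 then vcoarse n k j else 0) := by
    rw [Matrix.mulVec, dotProduct]
    rw [Finset.sum_congr rfl (fun jj _ => key jj), Finset.sum_add_distrib,
      Finset.sum_add_distrib, ← Finset.mul_sum, ← Finset.mul_sum]
  rw [hsum0, Pi.add_apply, Pi.smul_apply, Pi.smul_apply, smul_eq_mul, smul_eq_mul,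
    hvg, hvk']
  rcases Nat.even_or_odd i.val with ⟨q, hq⟩ | ⟨q, hq⟩
  · -- i.val = 2q, p = 2q+1 odd
    have hqM : q ≤ (n-3)/2 := by omega
    have U1 : (∑ j : Fin ((n-3)/2), if i.val+1 = 2*j.val+1 then vcoarse n k j else 0)
        = g (i.val+2) := by
      rw [sum_ite_two]
      by_cases h : q < (n-3)/2
      · rw [dif_pos (⟨by omega, by omega, by omega⟩ :
          1 ≤ i.val+1 ∧ (i.val+1-1) % 2 = 0 ∧ (i.val+1-1)/2 < (n-3)/2), uc']
        congr 1 <;> omega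
      · rw [dif_neg (by omega), show i.val+2 = n-1 by omega, hgN]
    have U2 : (∑ j : Fin ((n-3)/2), if i.val+1 = 2*j.val+2 then vcoarse n k j else 0)
        = 0 := by
      rw [sum_ite_two, dif_neg (by omega)]
    have U3 : (∑ j : Fin ((n-3)/2), if i.val+1 = 2*j.val+3 then vcoarse n k j else 0)
        = g i.val := by
      rw [sum_ite_two]
      by_cases h : 1 ≤ q
      · rw [dif_pos (⟨by omega, by omega, by omega⟩ :
          3 ≤ i.val+1 ∧ (i.val+1-3) % 2 = 0 ∧ (i.val+1-3)/2 < (n-3)/2), uc']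
        congr 1 <;> omega
      · rw [dif_neg (by omega), show i.val = 0 by omega, hg0]
    rw [U1, U2, U3]
    -- sin(pπ - pa) = sin(pa) for odd p
    have hodd' : Real.sin (((i.val+1 : ℕ):ℝ) * Real.pi - ((i.val+1 : ℕ):ℝ) * a)
        = Real.sin (((i.val+1 : ℕ):ℝ) * a) := by
      rw [show (i.val+1 : ℕ) = 2*q+1 by omega] at *
      exact sin_odd_pi_sub q _
    rw [hodd']
    have e1 : (i.val:ℝ) * a = ((i.val+1 : ℕ):ℝ) * a - a := by push_cast; ring
    have e2 : ((i.val+2 : ℕ):ℝ) * a = ((i.val+1 : ℕ):ℝ) * a + a := by push_cast; ring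
    have hgi : g i.val + g (i.val+2)
        = 2 * Real.sin (((i.val+1 : ℕ):ℝ) * a) * Real.cos a := by
      simp only [hgdef]
      rw [e1, e2, Real.sin_add, Real.sin_sub]
      ring
    have hgv : g (i.val+1) = Real.sin (((i.val+1 : ℕ):ℝ) * a) := by simp [hgdef]
    rw [hth, hgv]
    linear_combination (1/2) * hgi + Real.sin (((i.val+1 : ℕ):ℝ) * a) * hcos + Real.sin (((i.val+1 : ℕ):ℝ) * a) * hpyth
  · -- i.val = 2q+1, p = 2q+2 even
    have U1 : (∑ j : Fin ((n-3)/2), if i.val+1 = 2*j.val+1 then vcoarse n k j else 0)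
        = 0 := by
      rw [sum_ite_two, dif_neg (by omega)]
    have U3 : (∑ j : Fin ((n-3)/2), if i.val+1 = 2*j.val+3 then vcoarse n k j else 0)
        = 0 := by
      rw [sum_ite_two, dif_neg (by omega)]
    have U2 : (∑ j : Fin ((n-3)/2), if i.val+1 = 2*j.val+2 then vcoarse n k j else 0)
        = g (i.val+1) := by
      rw [sum_ite_two, dif_pos (⟨by omega, by omega, by omega⟩ :
        2 ≤ i.val+1 ∧ (i.val+1-2) % 2 = 0 ∧ (i.val+1-2)/2 < (n-3)/2), uc']
      congr 1 <;> omega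
    rw [U1, U2, U3]
    have heven : Real.sin (((i.val+1 : ℕ):ℝ) * Real.pi - ((i.val+1 : ℕ):ℝ) * a)
        = -Real.sin (((i.val+1 : ℕ):ℝ) * a) := by
      rw [show (i.val+1 : ℕ) = 2*(q+1) by omega] at *
      exact sin_even_pi_sub (q+1) _
    rw [heven]
    have hgv : g (i.val+1) = Real.sin (((i.val+1 : ℕ):ℝ) * a) := by simp [hgdef]
    rw [hth, hgv]
    linear_combination (-(Real.sin (((i.val+1 : ℕ):ℝ) * a))) * hpyth

end Eigen

theorem twogrid_kernel_high_modes (n : ℕ) (hodd : Odd n) (hn : 3 ≤ n)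
    (S : Matrix (Fin (n-2)) (Fin (n-2)) ℝ) (μ : ℕ → ℝ)
    (hS : ∀ k, 1 ≤ k → k ≤ n - 2 → S.mulVec (vmode n k) = μ k • vmode n k)
    (hA2 : IsUnit (coarseA n).det)
    (k : ℕ) (hk1 : (n-1)/2 < k) (hk2 : k ≤ n - 2)
    (hmu : μ (n-1-k) ≠ 0) :
    (twogrid n S).mulVec
      (vmode n k +
        (-(Real.sin (theta n k) ^ 2 * μ k) / (Real.cos (theta n k) ^ 2 * μ (n-1-k))) •
          vmode n (n-1-k)) = 0 := by
  have hnodd : n % 2 = 1 := by obtain ⟨t, ht⟩ := hodd; omega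
  have hk : k ≤ n - 1 := by omega
  have hk1' : 1 ≤ k := by omega
  have hkn1 : k < n - 1 := by omega
  have hk'1 : 1 ≤ n-1-k := by omega
  have hk'2 : n-1-k ≤ n-2 := by omega
  have hc : (0:ℝ) < (n:ℝ) - 1 := by
    have : (3:ℝ) ≤ (n:ℝ) := by exact_mod_cast hn
    linarith
  have hθpos : 0 < theta n k := by
    rw [theta]
    apply div_pos
    · apply mul_pos _ Real.pi_pos
      exact_mod_cast hk1'
    · linarith
  have hθlt : theta n k < Real.pi/2 := by
    rw [theta]
    rw [div_lt_div_iff₀ (by linarith) two_pos]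
    have hkr : (k:ℝ) < (n:ℝ) - 1 := by
      have h1 : (k:ℝ) < ((n-1 : ℕ):ℝ) := by exact_mod_cast hkn1
      rw [Nat.cast_sub (by omega : 1 ≤ n)] at h1
      exact_mod_cast h1
    nlinarith [Real.pi_pos]
  have hsinθ : 0 < Real.sin (theta n k) :=
    Real.sin_pos_of_pos_of_lt_pi hθpos (by linarith [Real.pi_pos])
  have hcosθ : 0 < Real.cos (theta n k) :=
    Real.cos_pos_of_mem_Ioo ⟨by linarith [Real.pi_pos], hθlt⟩
  have hthf := theta_flip n k hn hk
  have hcosf : Real.cos (theta n (n-1-k)) = Real.sin (theta n k) := by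
    rw [hthf, Real.cos_pi_div_two_sub]
  have hlamk : lamk n k = 4*((n:ℝ)-1)^2 * Real.sin (theta n k)^2 := rfl
  have hlamk' : lamk n (n-1-k) = 4*((n:ℝ)-1)^2 * Real.cos (theta n k)^2 := by
    have h0 : lamk n (n-1-k) = 4*((n:ℝ)-1)^2*Real.sin (theta n (n-1-k))^2 := rfl
    rw [h0, hthf, Real.sin_pi_div_two_sub]
  have hPTk : ((interp n)ᵀ).mulVec (vmode n k)
      = (2*Real.cos (theta n k)^2) • vcoarse n k := restrict_eigen n k hn hodd
  have hPTk' : ((interp n)ᵀ).mulVec (vmode n (n-1-k))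
      = (-(2*Real.sin (theta n k)^2)) • vcoarse n k := by
    rw [restrict_eigen n (n-1-k) hn hodd, hcosf, vcoarse_flip n k hn hk,
      smul_neg, ← neg_smul]
  have hPk : (interp n).mulVec (vcoarse n k)
      = (Real.cos (theta n k)^2) • vmode n k
        + (-(Real.sin (theta n k)^2)) • vmode n (n-1-k) :=
    prolong_eigen n k hn hodd hk
  have hSb : S.mulVec (vmode n k +
      (-(Real.sin (theta n k) ^ 2 * μ k) / (Real.cos (theta n k) ^ 2 * μ (n-1-k))) •
        vmode n (n-1-k))
      = μ k • vmode n k +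
        ((-(Real.sin (theta n k) ^ 2 * μ k) / (Real.cos (theta n k) ^ 2 * μ (n-1-k))) *
          μ (n-1-k)) • vmode n (n-1-k) := by
    rw [Matrix.mulVec_add, Matrix.mulVec_smul, hS k hk1' hk2, hS (n-1-k) hk'1 hk'2,
      smul_smul]
  have hcos2 : Real.cos (theta n k)^2 ≠ 0 := by positivity
  have hPTA : ((interp n)ᵀ).mulVec (lap n *ᵥ (μ k • vmode n k +
      ((-(Real.sin (theta n k) ^ 2 * μ k) / (Real.cos (theta n k) ^ 2 * μ (n-1-k))) *
        μ (n-1-k)) • vmode n (n-1-k)))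
      = (μ k / Real.cos (theta n k)^2) • ((coarseA n).mulVec (vcoarse n k)) := by
    rw [coarseA, ← Matrix.mulVec_mulVec, ← Matrix.mulVec_mulVec, hPk]
    simp only [Matrix.mulVec_add, Matrix.mulVec_smul, lap_eigen n k hn,
      lap_eigen n (n-1-k) hn, hPTk, hPTk', smul_smul, smul_add, hlamk, hlamk']
    match_scalars
    field_simp
  rw [twogrid, ← Matrix.mulVec_mulVec, hSb, Matrix.sub_mulVec, Matrix.one_mulVec,
    ← Matrix.mulVec_mulVec, ← Matrix.mulVec_mulVec, ← Matrix.mulVec_mulVec, hPTA,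
    Matrix.mulVec_smul, Matrix.mulVec_mulVec, Matrix.nonsing_inv_mul _ hA2,
    Matrix.one_mulVec, Matrix.mulVec_smul, hPk]
  match_scalars
  · field_simp
    ring
  · field_simp
    ring
end

section
/- With two pre-smoothing steps of weighted-Jacobi with weights ω₁ and ω₂, the nonzero two-grid eigenvalues are λ_k(R^{TG}) = 1 − 2(ω₁+ω₂)(sin⁴(kπh/2)+cos⁴(kπh/2)) + 4ω₁ω₂(sin⁶(kπh/2)+cos⁶(kπh/2)) for 1 ≤ k ≤ (n−1)/2. -/
open Real Matrix

lemma lap_expand (n : ℕ) (i j : Fin (n-2)) (x : ℝ) :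
    lap n i j * x = ((n:ℝ)-1)^2 *
      ((if (i:ℕ) = (j:ℕ) then 2 * x else 0) + (if (i:ℕ) + 1 = (j:ℕ) then -x else 0)
        + (if (j:ℕ) + 1 = (i:ℕ) then -x else 0)) := by
  have : (i = j) ↔ ((i:ℕ) = (j:ℕ)) := Fin.ext_iff
  unfold lap
  simp only [Matrix.of_apply, this]
  split_ifs <;> first | ring1 | (exfalso; omega)

lemma sum_ite_val {m : ℕ} (f : Fin m → ℝ) (t : ℕ) :
    (∑ j : Fin m, if t = (j:ℕ) then f j else 0) = if h : t < m then f ⟨t, h⟩ else 0 := by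
  by_cases h : t < m
  · rw [dif_pos h, Finset.sum_eq_single (⟨t, h⟩ : Fin m)]
    · simp
    · intro b _ hb
      exact if_neg fun he => hb (by exact Fin.ext he.symm)
    · simp
  · rw [dif_neg h]
    exact Finset.sum_eq_zero fun j _ => if_neg fun he => h (by rw [he]; exact j.isLt)

lemma sum_ite_val_pred {m : ℕ} (f : Fin m → ℝ) (t : ℕ) :
    (∑ j : Fin m, if (j:ℕ) + 1 = t then f j else 0)
      = if h : t - 1 < m ∧ 1 ≤ t then f ⟨t - 1, h.1⟩ else 0 := by
  rcases t with _ | s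
  · simp
  · have e : ∀ j : Fin m, (if (j:ℕ) + 1 = s + 1 then f j else 0) = (if s = (j:ℕ) then f j else 0) := by
      intro j
      refine if_congr ?_ rfl rfl
      omega
    rw [Finset.sum_congr rfl (fun j _ => e j), sum_ite_val f s]
    by_cases h : s < m <;> simp [h]

lemma lap_mulVec (n : ℕ) (hn : 3 ≤ n) (k : ℕ) :
    lap n *ᵥ vmode n k = lamk n k • vmode n k := by
  have hn' : (3:ℝ) ≤ (n:ℝ) := by exact_mod_cast hn
  have hN : ((n:ℝ) - 1) ≠ 0 := by linarith
  set V : ℕ → ℝ := fun p => Real.sin (p * k * Real.pi / ((n : ℝ) - 1)) with hV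
  have hv : ∀ j : Fin (n-2), vmode n k j = V ((j:ℕ)+1) := by
    intro j
    simp only [vmode, hV]
    push_cast
    ring_nf
  have hV0 : V 0 = 0 := by simp [hV]
  have hVn : V (n-1) = 0 := by
    have harg : ((n-1 : ℕ):ℝ) * k * Real.pi / ((n : ℝ) - 1) = k * Real.pi := by
      have : ((n-1 : ℕ):ℝ) = (n:ℝ) - 1 := by
        push_cast [Nat.cast_sub (by omega : 1 ≤ n)]
        ring
      rw [this]
      field_simp
    simp only [hV, harg]
    exact Real.sin_nat_mul_pi k
  funext i
  have expand : ∀ j : Fin (n-2), lap n i j * vmode n k j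
      = ((n:ℝ)-1)^2 * ((if (i:ℕ) = (j:ℕ) then 2 * vmode n k j else 0)
        + (if (i:ℕ) + 1 = (j:ℕ) then -vmode n k j else 0)
        + (if (j:ℕ) + 1 = (i:ℕ) then -vmode n k j else 0)) := fun j => lap_expand n i j _
  have lhs : (lap n *ᵥ vmode n k) i = ((n:ℝ)-1)^2 * (2 * V ((i:ℕ)+1) - V ((i:ℕ)+2) - V (i:ℕ)) := by
    show (∑ j, lap n i j * vmode n k j) = _
    rw [Finset.sum_congr rfl (fun j _ => expand j), ← Finset.mul_sum]
    congr 1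
    rw [Finset.sum_add_distrib, Finset.sum_add_distrib, sum_ite_val, sum_ite_val, sum_ite_val_pred]
    rw [dif_pos i.isLt]
    have t1 : (if h : (i:ℕ) + 1 < n - 2 then -vmode n k ⟨(i:ℕ)+1, h⟩ else 0) = -V ((i:ℕ)+2) := by
      by_cases h : (i:ℕ) + 1 < n - 2
      · rw [dif_pos h, hv]
      · rw [dif_neg h]
        have : (i:ℕ) + 2 = n - 1 := by have := i.isLt; omega
        rw [this, hVn, neg_zero]
    have t2 : (if h : (i:ℕ) - 1 < n - 2 ∧ 1 ≤ (i:ℕ) then -vmode n k ⟨(i:ℕ)-1, h.1⟩ else 0)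
        = -V (i:ℕ) := by
      by_cases h : (i:ℕ) - 1 < n - 2 ∧ 1 ≤ (i:ℕ)
      · rw [dif_pos h, hv]
        congr 2
        simp only [Fin.val_mk]
        omega
      · rw [dif_neg h]
        have : (i:ℕ) = 0 := by have := i.isLt; omega
        rw [this, hV0, neg_zero]
    rw [t1, t2, hv]
    ring
  rw [lhs]
  have harg2 : ∀ p : ℕ, (p:ℝ) * k * Real.pi / ((n : ℝ) - 1)
      = (p:ℝ) * ((k:ℝ) * Real.pi / ((n : ℝ) - 1)) := by
    intro p; ring
  have hx2 : ((i:ℕ) + 2 : ℕ) = ((i:ℕ)+1) + 1 := rfl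
  have hsplit : ∀ (dummy : Unit), True := fun _ => trivial
  -- rewrite V(i+2) and V(i) as sin(x ± φ)
  set φ := (k:ℝ) * Real.pi / ((n : ℝ) - 1) with hφ
  set x := (((i:ℕ)+1 : ℕ):ℝ) * φ with hx
  have e1 : V ((i:ℕ)+1) = Real.sin x := by simp [hV, hx, hφ]; ring_nf
  have e2 : V ((i:ℕ)+2) = Real.sin (x + φ) := by
    have : ((((i:ℕ)+2 : ℕ)):ℝ) * k * Real.pi / ((n : ℝ) - 1) = x + φ := by
      rw [hx, hφ]; push_cast; ring
    simp only [hV, this]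
  have e3 : V ((i:ℕ)) = Real.sin (x - φ) := by
    have : ((((i:ℕ) : ℕ)):ℝ) * k * Real.pi / ((n : ℝ) - 1) = x - φ := by
      rw [hx, hφ]; push_cast; ring
    simp only [hV, this]
  have hcos : Real.cos φ = 1 - 2 * Real.sin ((k:ℝ) * Real.pi / (2 * ((n : ℝ) - 1)))^2 := by
    have : φ = 2 * ((k:ℝ) * Real.pi / (2 * ((n : ℝ) - 1))) := by
      rw [hφ]; field_simp
    rw [this, Real.cos_two_mul]
    linear_combination 2 * (Real.sin_sq_add_cos_sq ((k:ℝ) * Real.pi / (2 * ((n : ℝ) - 1))))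
  have rhs : (lamk n k • vmode n k) i = lamk n k * Real.sin x := by
    simp only [Pi.smul_apply, smul_eq_mul, hv, e1]
  rw [rhs, e1, e2, e3, Real.sin_add, Real.sin_sub, lamk, hcos]
  ring

lemma sum_ite_affine {m : ℕ} (f : Fin m → ℝ) (t b : ℕ) :
    (∑ j : Fin m, if t = 2*(j:ℕ) + b then f j else 0)
      = if h : (t-b)/2 < m ∧ t % 2 = b % 2 ∧ b ≤ t then f ⟨(t-b)/2, h.1⟩ else 0 := by
  by_cases h : (t-b)/2 < m ∧ t % 2 = b % 2 ∧ b ≤ t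
  · rw [dif_pos h, Finset.sum_eq_single (⟨(t-b)/2, h.1⟩ : Fin m)]
    · rw [if_pos (by simp only [Fin.val_mk]; omega)]
    · intro j _ hj
      exact if_neg fun he => hj (Fin.ext (by simp only [Fin.val_mk]; omega))
    · simp
  · rw [dif_neg h]
    refine Finset.sum_eq_zero fun j _ => if_neg fun he => h ?_
    have := j.isLt
    omega

lemma jacobi_mulVec (n : ℕ) (hn : 3 ≤ n) (ω : ℝ) (k : ℕ) :
    jacobi n ω *ᵥ vmode n k = (1 - 2 * ω * Real.sin (theta n k)^2) • vmode n k := by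
  have hn' : (3:ℝ) ≤ (n:ℝ) := by exact_mod_cast hn
  have hN : ((n:ℝ) - 1) ≠ 0 := by linarith
  have hd : (fun i : Fin (n-2) => lap n i i) = fun _ => 2 * ((n:ℝ)-1)^2 := by
    funext i
    simp [lap]
    ring
  have h2 : (2 * ((n:ℝ)-1)^2) ≠ 0 := by positivity
  have hinv : (Matrix.diagonal fun i : Fin (n-2) => lap n i i)⁻¹
      = Matrix.diagonal (fun _ : Fin (n-2) => (2*((n:ℝ)-1)^2)⁻¹) := by
    apply Matrix.inv_eq_right_inv
    rw [hd, Matrix.diagonal_mul_diagonal]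
    rw [show (fun _ : Fin (n-2) => 2*((n:ℝ)-1)^2 * (2*((n:ℝ)-1)^2)⁻¹)
        = fun _ => (1:ℝ) from funext fun _ => mul_inv_cancel₀ h2]
    exact Matrix.diagonal_one
  unfold jacobi
  rw [Matrix.sub_mulVec, Matrix.one_mulVec, Matrix.smul_mulVec,
    ← Matrix.mulVec_mulVec, lap_mulVec n hn, Matrix.mulVec_smul, hinv]
  funext i
  simp only [Pi.smul_apply, Pi.sub_apply, Matrix.mulVec_diagonal, smul_eq_mul]
  show vmode n k i - ω * (lamk n k * ((2*((n:ℝ)-1)^2)⁻¹ * vmode n k i))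
      = (1 - 2 * ω * Real.sin (theta n k)^2) * vmode n k i
  rw [lamk, theta]
  rw [inv_mul_eq_div]
  have h3 : ((n:ℝ)-1)^2 ≠ 0 := by positivity
  field_simp
  ring

lemma interp_expand_row (n : ℕ) (i : Fin (n-2)) (j : Fin ((n-3)/2)) (x : ℝ) :
    interp n i j * x = (if 2*(j:ℕ) = (i:ℕ) then x/2 else 0)
      + (if 2*(j:ℕ)+1 = (i:ℕ) then x else 0) + (if 2*(j:ℕ)+2 = (i:ℕ) then x/2 else 0) := by
  unfold interp
  simp only [Matrix.of_apply]
  split_ifs <;> first | ring1 | (exfalso; omega)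

lemma interp_expand_col (n : ℕ) (i : Fin (n-2)) (j : Fin ((n-3)/2)) (x : ℝ) :
    interp n i j * x = (if (i:ℕ) = 2*(j:ℕ) + 0 then x/2 else 0)
      + (if (i:ℕ) = 2*(j:ℕ)+1 then x else 0) + (if (i:ℕ) = 2*(j:ℕ)+2 then x/2 else 0) := by
  unfold interp
  simp only [Matrix.of_apply]
  split_ifs <;> first | ring1 | (exfalso; omega)

lemma cos_phi (θ : ℝ) : Real.cos (2*θ) = Real.cos θ^2 - Real.sin θ^2 := by
  rw [Real.cos_two_mul]
  linear_combination Real.sin_sq_add_cos_sq θ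

lemma interpT_mulVec (n : ℕ) (hn : 3 ≤ n) (k : ℕ) :
    (interp n)ᵀ *ᵥ vmode n k = (2 * Real.cos (theta n k)^2) • vcoarse n k := by
  have hn' : (3:ℝ) ≤ (n:ℝ) := by exact_mod_cast hn
  have hN : ((n:ℝ) - 1) ≠ 0 := by linarith
  funext j
  have hj := j.isLt
  show (∑ i, interp n i j * vmode n k i) = _
  rw [Finset.sum_congr rfl (fun i _ => interp_expand_row n i j (vmode n k i)),
    Finset.sum_add_distrib, Finset.sum_add_distrib, sum_ite_val, sum_ite_val, sum_ite_val]
  rw [dif_pos (by omega : 2*(j:ℕ) < n-2), dif_pos (by omega : 2*(j:ℕ)+1 < n-2),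
    dif_pos (by omega : 2*(j:ℕ)+2 < n-2)]
  set φ := (k:ℝ) * Real.pi / ((n : ℝ) - 1) with hφ
  set y := (2*(j:ℕ)+2 : ℝ) * φ with hy
  have e1 : vmode n k ⟨2*(j:ℕ), by omega⟩ = Real.sin (y - φ) := by
    simp only [vmode, Fin.val_mk]
    congr 1
    rw [hy, hφ]; push_cast; ring
  have e2 : vmode n k ⟨2*(j:ℕ)+1, by omega⟩ = Real.sin y := by
    simp only [vmode, Fin.val_mk]
    congr 1
    rw [hy, hφ]; push_cast; ring
  have e3 : vmode n k ⟨2*(j:ℕ)+2, by omega⟩ = Real.sin (y + φ) := by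
    simp only [vmode, Fin.val_mk]
    congr 1
    rw [hy, hφ]; push_cast; ring
  have e4 : vcoarse n k j = Real.sin y := by
    simp only [vcoarse]
    congr 1
    rw [hy, hφ]; push_cast; ring
  have hc : Real.cos φ = Real.cos (theta n k)^2 - Real.sin (theta n k)^2 := by
    have : φ = 2 * theta n k := by rw [hφ, theta]; field_simp
    rw [this, cos_phi]
  have hpy := Real.sin_sq_add_cos_sq (theta n k)
  rw [e1, e2, e3, Pi.smul_apply, smul_eq_mul, e4, Real.sin_add, Real.sin_sub, hc]
  linear_combination (-Real.sin y) * hpy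

lemma theta_compl (n k : ℕ) (hn : 3 ≤ n) (hk : k ≤ n-1) :
    theta n (n-1-k) = Real.pi/2 - theta n k := by
  have hn' : (3:ℝ) ≤ (n:ℝ) := by exact_mod_cast hn
  have hN : ((n:ℝ) - 1) ≠ 0 := by linarith
  have hcast : ((n-1-k : ℕ):ℝ) = (n:ℝ) - 1 - k := by
    push_cast [Nat.cast_sub (by omega : k ≤ n-1), Nat.cast_sub (by omega : 1 ≤ n)]
    ring
  rw [theta, theta, hcast]
  field_simp

lemma sin_theta_compl (n k : ℕ) (hn : 3 ≤ n) (hk : k ≤ n-1) :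
    Real.sin (theta n (n-1-k)) = Real.cos (theta n k) := by
  rw [theta_compl n k hn hk, Real.sin_pi_div_two_sub]

lemma cos_theta_compl (n k : ℕ) (hn : 3 ≤ n) (hk : k ≤ n-1) :
    Real.cos (theta n (n-1-k)) = Real.sin (theta n k) := by
  rw [theta_compl n k hn hk, Real.cos_pi_div_two_sub]

lemma vcoarse_compl (n k : ℕ) (hn : 3 ≤ n) (hk : k ≤ n-1) :
    vcoarse n (n-1-k) = - vcoarse n k := by
  have hn' : (3:ℝ) ≤ (n:ℝ) := by exact_mod_cast hn
  have hN : ((n:ℝ) - 1) ≠ 0 := by linarith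
  have hcast : ((n-1-k : ℕ):ℝ) = (n:ℝ) - 1 - k := by
    push_cast [Nat.cast_sub (by omega : k ≤ n-1), Nat.cast_sub (by omega : 1 ≤ n)]
    ring
  funext j
  show Real.sin _ = - Real.sin _
  rw [hcast]
  have harg : 2 * ((j:ℕ) + 1 : ℝ) * ((n:ℝ) - 1 - k) * Real.pi / ((n:ℝ) - 1)
      = ((2*((j:ℕ)+1) : ℕ) : ℝ) * Real.pi - 2 * ((j:ℕ) + 1 : ℝ) * k * Real.pi / ((n:ℝ) - 1) := by
    push_cast
    field_simp
  rw [harg, Real.sin_nat_mul_pi_sub]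
  have : ((-1:ℝ))^(2*((j:ℕ)+1)) = 1 := Even.neg_one_pow ⟨(j:ℕ)+1, by ring⟩
  rw [this]
  push_cast
  ring_nf

lemma interp_mulVec (n k : ℕ) (hn : 3 ≤ n) (hodd : Odd n) (hk : k ≤ n-1) :
    interp n *ᵥ vcoarse n k = (Real.cos (theta n k)^2) • vmode n k
        - (Real.sin (theta n k)^2) • vmode n (n-1-k) := by
  have hn' : (3:ℝ) ≤ (n:ℝ) := by exact_mod_cast hn
  have hN : ((n:ℝ) - 1) ≠ 0 := by linarith
  obtain ⟨m, hm⟩ := hodd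
  have hcast : ((n-1-k : ℕ):ℝ) = (n:ℝ) - 1 - k := by
    push_cast [Nat.cast_sub (by omega : k ≤ n-1), Nat.cast_sub (by omega : 1 ≤ n)]
    ring
  set φ := (k:ℝ) * Real.pi / ((n : ℝ) - 1) with hφ
  set W : ℕ → ℝ := fun p => Real.sin ((2*p : ℕ) * φ) with hW
  have hw : ∀ j : Fin ((n-3)/2), vcoarse n k j = W ((j:ℕ)+1) := by
    intro j
    simp only [vcoarse, hW, hφ]
    congr 1
    push_cast
    ring
  have hW0 : W 0 = 0 := by simp [hW]
  have hWtop : W ((n-1)/2) = 0 := by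
    have h2 : (2 * ((n-1)/2) : ℕ) = n - 1 := by omega
    have : ((n-1 : ℕ):ℝ) * φ = (k:ℝ) * Real.pi := by
      rw [hφ, Nat.cast_sub (by omega : 1 ≤ n)]
      push_cast
      field_simp
    simp only [hW, h2, this]
    exact Real.sin_nat_mul_pi k
  -- V' for the complementary mode
  have hVc : ∀ p : ℕ, Real.sin ((p:ℝ) * ((n-1-k : ℕ):ℝ) * Real.pi / ((n:ℝ)-1))
      = -((-1:ℝ)^p * Real.sin ((p:ℝ) * φ)) := by
    intro p
    have harg : (p:ℝ) * ((n-1-k : ℕ):ℝ) * Real.pi / ((n:ℝ)-1)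
        = (p:ℝ) * Real.pi - (p:ℝ) * φ := by
      rw [hcast, hφ]
      field_simp
    rw [harg, Real.sin_nat_mul_pi_sub]
  have hpy := Real.sin_sq_add_cos_sq (theta n k)
  have hc : Real.cos φ = Real.cos (theta n k)^2 - Real.sin (theta n k)^2 := by
    have : φ = 2 * theta n k := by rw [hφ, theta]; field_simp
    rw [this, cos_phi]
  funext i
  have hi := i.isLt
  show (∑ j, interp n i j * vcoarse n k j) = _
  rw [Finset.sum_congr rfl (fun j _ => interp_expand_col n i j (vcoarse n k j)),
    Finset.sum_add_distrib, Finset.sum_add_distrib, sum_ite_affine, sum_ite_affine,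
    sum_ite_affine]
  have hrhs : ((Real.cos (theta n k)^2) • vmode n k
      - (Real.sin (theta n k)^2) • vmode n (n-1-k)) i
      = Real.cos (theta n k)^2 * Real.sin (((i:ℕ)+1 : ℝ) * φ)
        - Real.sin (theta n k)^2 *
          (-((-1:ℝ)^((i:ℕ)+1) * Real.sin (((i:ℕ)+1 : ℝ) * φ))) := by
    simp only [Pi.sub_apply, Pi.smul_apply, smul_eq_mul, vmode]
    rw [show ((i:ℕ) + 1 : ℝ) * ((n-1-k : ℕ):ℝ) * Real.pi / ((n:ℝ)-1)
        = (((i:ℕ)+1 : ℕ):ℝ) * ((n-1-k : ℕ):ℝ) * Real.pi / ((n:ℝ)-1) from by push_cast; ring]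
    rw [hVc ((i:ℕ)+1)]
    congr 2
    · congr 1
      rw [hφ]; push_cast; ring
    · push_cast; ring
  rw [hrhs]
  rcases Nat.even_or_odd (i:ℕ) with ⟨q, hq⟩ | ⟨q, hq⟩
  · -- i = q + q, p = 2q+1 odd
    have hA : (if h : ((i:ℕ)-0)/2 < (n-3)/2 ∧ (i:ℕ) % 2 = 0 % 2 ∧ 0 ≤ (i:ℕ)
        then vcoarse n k ⟨((i:ℕ)-0)/2, h.1⟩ / 2 else 0) = W (q+1) / 2 := by
      by_cases h : ((i:ℕ)-0)/2 < (n-3)/2 ∧ (i:ℕ) % 2 = 0 % 2 ∧ 0 ≤ (i:ℕ)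
      · rw [dif_pos h, hw]
        congr 2
        simp only [Fin.val_mk]
        omega
      · rw [dif_neg h]
        have : q + 1 = (n-1)/2 := by omega
        rw [this, hWtop, zero_div]
    have hB : (if h : ((i:ℕ)-1)/2 < (n-3)/2 ∧ (i:ℕ) % 2 = 1 % 2 ∧ 1 ≤ (i:ℕ)
        then vcoarse n k ⟨((i:ℕ)-1)/2, h.1⟩ else 0) = 0 := by
      rw [dif_neg]
      intro h
      omega
    have hC : (if h : ((i:ℕ)-2)/2 < (n-3)/2 ∧ (i:ℕ) % 2 = 2 % 2 ∧ 2 ≤ (i:ℕ)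
        then vcoarse n k ⟨((i:ℕ)-2)/2, h.1⟩ / 2 else 0) = W q / 2 := by
      by_cases h : ((i:ℕ)-2)/2 < (n-3)/2 ∧ (i:ℕ) % 2 = 2 % 2 ∧ 2 ≤ (i:ℕ)
      · rw [dif_pos h, hw]
        congr 2
        simp only [Fin.val_mk]
        omega
      · rw [dif_neg h]
        have : q = 0 := by omega
        rw [this, hW0, zero_div]
    rw [hA, hB, hC]
    have hsign : ((-1:ℝ))^((i:ℕ)+1) = -1 := Odd.neg_one_pow ⟨q, by omega⟩
    rw [hsign]
    have eA : W (q+1) = Real.sin ((((i:ℕ)+1:ℝ)) * φ + φ) := by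
      simp only [hW]
      congr 1
      push_cast
      rw [show ((i:ℕ):ℝ) = 2*(q:ℝ) from by exact_mod_cast congrArg Nat.cast (by omega : (i:ℕ) = 2*q)]
      ring
    have eC : W q = Real.sin ((((i:ℕ)+1:ℝ)) * φ - φ) := by
      simp only [hW]
      congr 1
      push_cast
      rw [show ((i:ℕ):ℝ) = 2*(q:ℝ) from by exact_mod_cast congrArg Nat.cast (by omega : (i:ℕ) = 2*q)]
      ring
    rw [eA, eC, Real.sin_add, Real.sin_sub, hc]
    ring
  · -- i = 2q+1, p = 2q+2 even
    have hA : (if h : ((i:ℕ)-0)/2 < (n-3)/2 ∧ (i:ℕ) % 2 = 0 % 2 ∧ 0 ≤ (i:ℕ)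
        then vcoarse n k ⟨((i:ℕ)-0)/2, h.1⟩ / 2 else 0) = 0 := by
      rw [dif_neg]
      intro h
      omega
    have hC : (if h : ((i:ℕ)-2)/2 < (n-3)/2 ∧ (i:ℕ) % 2 = 2 % 2 ∧ 2 ≤ (i:ℕ)
        then vcoarse n k ⟨((i:ℕ)-2)/2, h.1⟩ / 2 else 0) = 0 := by
      rw [dif_neg]
      intro h
      omega
    have hB : (if h : ((i:ℕ)-1)/2 < (n-3)/2 ∧ (i:ℕ) % 2 = 1 % 2 ∧ 1 ≤ (i:ℕ)
        then vcoarse n k ⟨((i:ℕ)-1)/2, h.1⟩ else 0) = W (q+1) := by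
      rw [dif_pos (by omega)]
      rw [hw]
      congr 1
      simp only [Fin.val_mk]
      omega
    rw [hA, hB, hC]
    have hsign : ((-1:ℝ))^((i:ℕ)+1) = 1 := Even.neg_one_pow ⟨q+1, by omega⟩
    rw [hsign]
    have eB : W (q+1) = Real.sin ((((i:ℕ)+1:ℝ)) * φ) := by
      simp only [hW]
      congr 1
      push_cast
      rw [show ((i:ℕ):ℝ) = 2*(q:ℝ)+1 from by exact_mod_cast congrArg Nat.cast (by omega : (i:ℕ) = 2*q+1)]
      ring
    rw [eB]
    linear_combination (- Real.sin ((((i:ℕ):ℝ)+1) * φ)) * hpy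

noncomputable def dmat (n : ℕ) : Matrix (Fin (n-1)) (Fin (n-2)) ℝ :=
  Matrix.of fun p j => ((n:ℝ)-1) *
    (if (p:ℕ) = (j:ℕ) then 1 else if (p:ℕ) = (j:ℕ) + 1 then -1 else 0)

lemma dmat_expand (n : ℕ) (p : Fin (n-1)) (j : Fin (n-2)) (x : ℝ) :
    dmat n p j * x = ((n:ℝ)-1) * ((if (p:ℕ) = (j:ℕ) then x else 0)
      + (if (j:ℕ) + 1 = (p:ℕ) then -x else 0)) := by
  unfold dmat
  simp only [Matrix.of_apply]
  split_ifs <;> first | ring1 | (exfalso; omega)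

lemma lap_eq_dmat (n : ℕ) (hn : 3 ≤ n) : lap n = (dmat n)ᵀ * dmat n := by
  ext j l
  show _ = ∑ p : Fin (n-1), dmat n p j * dmat n p l
  have expand : ∀ p : Fin (n-1), dmat n p j * dmat n p l
      = ((n:ℝ)-1)^2 * (((if (j:ℕ) = (p:ℕ) ∧ (l:ℕ) = (p:ℕ) then (1:ℝ) else 0)
        + (if (j:ℕ) = (p:ℕ) ∧ (l:ℕ) + 1 = (p:ℕ) then -1 else 0))
        + ((if (j:ℕ) + 1 = (p:ℕ) ∧ (l:ℕ) = (p:ℕ) then -1 else 0)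
        + (if (j:ℕ) + 1 = (p:ℕ) ∧ (l:ℕ) + 1 = (p:ℕ) then 1 else 0))) := by
    intro p
    unfold dmat
    simp only [Matrix.of_apply]
    split_ifs <;> first | ring1 | (exfalso; omega)
  rw [Finset.sum_congr rfl (fun p _ => expand p), ← Finset.mul_sum]
  rw [Finset.sum_add_distrib, Finset.sum_add_distrib, Finset.sum_add_distrib]
  have ev : ∀ (a b : ℕ) (c : ℝ), (∑ p : Fin (n-1), if a = (p:ℕ) ∧ b = (p:ℕ) then c else 0)
      = if a = b ∧ a < n-1 then c else 0 := by
    intro a b c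
    have : ∀ p : Fin (n-1), (if a = (p:ℕ) ∧ b = (p:ℕ) then c else 0)
        = (if a = (p:ℕ) then (if a = b then c else 0) else 0) := by
      intro p
      split_ifs <;> first | rfl | (exfalso; omega)
    rw [Finset.sum_congr rfl (fun p _ => this p), sum_ite_val (fun _ => if a = b then c else 0) a]
    by_cases h1 : a < n-1 <;> by_cases h2 : a = b <;> simp [h1, h2]
  rw [ev, ev, ev, ev]
  have hj := j.isLt
  have hl := l.isLt
  show ((n : ℝ) - 1)^2 *
      (if j = l then 2 else if (j:ℕ) + 1 = (l:ℕ) ∨ (l:ℕ) + 1 = (j:ℕ) then -1 else 0) = _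
  have : (j = l) ↔ ((j:ℕ) = (l:ℕ)) := Fin.ext_iff
  simp only [this]
  split_ifs <;> first | ring1 | (exfalso; omega)

lemma dmat_mulVec_eq_zero (n : ℕ) (hn : 3 ≤ n) (x : Fin (n-2) → ℝ)
    (h : dmat n *ᵥ x = 0) : x = 0 := by
  have hn' : (3:ℝ) ≤ (n:ℝ) := by exact_mod_cast hn
  have hN : ((n:ℝ) - 1) ≠ 0 := by linarith
  have row : ∀ p : Fin (n-1), ((n:ℝ)-1) * ((if h : (p:ℕ) < n-2 then x ⟨(p:ℕ), h⟩ else 0)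
      - (if h : (p:ℕ) - 1 < n-2 ∧ 1 ≤ (p:ℕ) then x ⟨(p:ℕ)-1, h.1⟩ else 0)) = 0 := by
    intro p
    have hp : (dmat n *ᵥ x) p = 0 := by rw [h]; rfl
    have hsum : (dmat n *ᵥ x) p = ((n:ℝ)-1) * ((if h : (p:ℕ) < n-2 then x ⟨(p:ℕ), h⟩ else 0)
        - (if h : (p:ℕ) - 1 < n-2 ∧ 1 ≤ (p:ℕ) then x ⟨(p:ℕ)-1, h.1⟩ else 0)) := by
      show (∑ j, dmat n p j * x j) = _
      rw [Finset.sum_congr rfl (fun j _ => dmat_expand n p j (x j)), ← Finset.mul_sum,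
        Finset.sum_add_distrib, sum_ite_val, sum_ite_val_pred]
      congr 1
      by_cases h1 : (p:ℕ) < n-2 <;> by_cases h2 : (p:ℕ) - 1 < n-2 ∧ 1 ≤ (p:ℕ) <;>
        simp [h1, h2] <;> ring
    rw [← hsum]
    exact hp
  have key : ∀ q, ∀ hq : q < n-2, x ⟨q, hq⟩ = 0 := by
    intro q
    induction q with
    | zero =>
      intro hq
      have := row ⟨0, by omega⟩
      rw [dif_pos (by simpa using hq), dif_neg (by simp)] at this
      have := mul_eq_zero.mp this
      rcases this with h' | h'
      · exact absurd h' hN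
      · simpa using h'
    | succ r ih =>
      intro hq
      have := row ⟨r+1, by omega⟩
      rw [dif_pos (by simpa using hq), dif_pos (by simp; omega)] at this
      have h2 := mul_eq_zero.mp this
      rcases h2 with h' | h'
      · exact absurd h' hN
      · have hr : x ⟨r, by omega⟩ = 0 := ih (by omega)
        have : x ⟨r+1, hq⟩ - x ⟨r+1-1, by omega⟩ = 0 := by simpa using h'
        rw [show (⟨r+1-1, by omega⟩ : Fin (n-2)) = ⟨r, by omega⟩ from rfl] at this
        rw [hr] at this
        simpa using this
  funext j
  have := key (j:ℕ) j.isLt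
  simpa using this

lemma interp_mulVec_eq_zero (n : ℕ) (hn : 3 ≤ n) (x : Fin ((n-3)/2) → ℝ)
    (h : interp n *ᵥ x = 0) : x = 0 := by
  funext j
  have hj := j.isLt
  have hp := congrFun h ⟨2*(j:ℕ)+1, by omega⟩
  have expand : ∀ j' : Fin ((n-3)/2), interp n ⟨2*(j:ℕ)+1, by omega⟩ j' * x j'
      = (if 2*(j:ℕ)+1 = 2*(j':ℕ) + 0 then x j'/2 else 0)
      + (if 2*(j:ℕ)+1 = 2*(j':ℕ)+1 then x j' else 0)
      + (if 2*(j:ℕ)+1 = 2*(j':ℕ)+2 then x j'/2 else 0) := by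
    intro j'
    unfold interp
    simp only [Matrix.of_apply, Fin.val_mk]
    split_ifs <;> first | ring1 | (exfalso; omega)
  have : (0:ℝ) = ∑ j', interp n ⟨2*(j:ℕ)+1, by omega⟩ j' * x j' := (hp).symm
  rw [Finset.sum_congr rfl (fun j' _ => expand j'), Finset.sum_add_distrib,
    Finset.sum_add_distrib, sum_ite_affine, sum_ite_affine, sum_ite_affine] at this
  have e0 : ¬((2*(j:ℕ)+1-0)/2 < (n-3)/2 ∧ (2*(j:ℕ)+1) % 2 = 0 % 2 ∧ 0 ≤ 2*(j:ℕ)+1) := by omega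
  have e1 : (2*(j:ℕ)+1-1)/2 < (n-3)/2 ∧ (2*(j:ℕ)+1) % 2 = 1 % 2 ∧ 1 ≤ 2*(j:ℕ)+1 := by omega
  have e2 : ¬((2*(j:ℕ)+1-2)/2 < (n-3)/2 ∧ (2*(j:ℕ)+1) % 2 = 2 % 2 ∧ 2 ≤ 2*(j:ℕ)+1) := by omega
  rw [dif_neg e0, dif_pos e1, dif_neg e2] at this
  have : x ⟨(2*(j:ℕ)+1-1)/2, e1.1⟩ = 0 := by simpa using this.symm
  rw [show (⟨(2*(j:ℕ)+1-1)/2, e1.1⟩ : Fin ((n-3)/2)) = j from Fin.ext (by simp only [Fin.val_mk]; omega)] at this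
  simpa using this

lemma coarseA_isUnit (n : ℕ) (hn : 3 ≤ n) : IsUnit (coarseA n) := by
  rw [← Matrix.mulVec_injective_iff_isUnit]
  intro x y hxy
  have hsub : coarseA n *ᵥ (x - y) = 0 := by
    rw [Matrix.mulVec_sub, hxy, sub_self]
  set u := x - y with hu
  have hM : coarseA n = (dmat n * interp n)ᵀ * (dmat n * interp n) := by
    rw [coarseA, lap_eq_dmat n hn, Matrix.transpose_mul]
    simp only [Matrix.mul_assoc]
  have key : ∀ (a b : ℕ) (A : Matrix (Fin a) (Fin b) ℝ) (v : Fin b → ℝ),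
      v ⬝ᵥ ((Aᵀ * A) *ᵥ v) = (A *ᵥ v) ⬝ᵥ (A *ᵥ v) := by
    intro a b A v
    rw [← Matrix.mulVec_mulVec, Matrix.dotProduct_mulVec, Matrix.vecMul_transpose]
  have hdot : ((dmat n * interp n) *ᵥ u) ⬝ᵥ ((dmat n * interp n) *ᵥ u) = 0 := by
    have h0 : u ⬝ᵥ (coarseA n *ᵥ u) = 0 := by rw [hsub]; simp
    rw [hM, key] at h0
    exact h0
  have h1 : dmat n *ᵥ (interp n *ᵥ u) = 0 := by
    rw [Matrix.mulVec_mulVec]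
    exact dotProduct_self_eq_zero.mp hdot
  have h2 : interp n *ᵥ u = 0 := dmat_mulVec_eq_zero n hn _ h1
  have h3 : u = 0 := interp_mulVec_eq_zero n hn _ h2
  have := sub_eq_zero.mp (hu ▸ h3)
  exact this

lemma inv_mulVec_eig {m : ℕ} (M : Matrix (Fin m) (Fin m) ℝ) (hM : IsUnit M)
    {w : Fin m → ℝ} {c d : ℝ} (h : M *ᵥ w = c • w) :
    M⁻¹ *ᵥ ((c * d) • w) = d • w := by
  have h2 : M *ᵥ (d • w) = (c * d) • w := by
    rw [Matrix.mulVec_smul, h, smul_smul, mul_comm]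
  rw [← h2, Matrix.mulVec_mulVec, Matrix.nonsing_inv_mul _ ((Matrix.isUnit_iff_isUnit_det _).mp hM),
    Matrix.one_mulVec]

lemma lamk_eq (n k : ℕ) : lamk n k = 4 * ((n:ℝ)-1)^2 * Real.sin (theta n k)^2 := rfl

lemma lamk_compl (n k : ℕ) (hn : 3 ≤ n) (hk : k ≤ n-1) :
    lamk n (n-1-k) = 4 * ((n:ℝ)-1)^2 * Real.cos (theta n k)^2 := by
  rw [lamk_eq, sin_theta_compl n k hn hk]

lemma coarseA_mulVec (n k : ℕ) (hn : 3 ≤ n) (hodd : Odd n) (hk : k ≤ n-1) :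
    coarseA n *ᵥ vcoarse n k
      = (8 * ((n:ℝ)-1)^2 * Real.sin (theta n k)^2 * Real.cos (theta n k)^2) • vcoarse n k := by
  have hpy := Real.sin_sq_add_cos_sq (theta n k)
  rw [coarseA, ← Matrix.mulVec_mulVec, ← Matrix.mulVec_mulVec,
    interp_mulVec n k hn hodd hk, Matrix.mulVec_sub, Matrix.mulVec_smul, Matrix.mulVec_smul,
    lap_mulVec n hn, lap_mulVec n hn, Matrix.mulVec_sub, Matrix.mulVec_smul, Matrix.mulVec_smul,
    Matrix.mulVec_smul, Matrix.mulVec_smul, interpT_mulVec n hn, interpT_mulVec n hn,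
    cos_theta_compl n k hn hk, vcoarse_compl n k hn hk, lamk_eq, lamk_compl n k hn hk]
  funext j
  simp only [Pi.sub_apply, Pi.smul_apply, Pi.neg_apply, smul_eq_mul]
  linear_combination (8 * ((n:ℝ)-1)^2 * Real.sin (theta n k)^2 * Real.cos (theta n k)^2
      * vcoarse n k j) * hpy


theorem twogrid_two_jacobi_eigen (n : ℕ) (hodd : Odd n) (hn : 3 ≤ n) (ω₁ ω₂ : ℝ)
    (k : ℕ) (hk1 : 1 ≤ k) (hk2 : k ≤ (n-1)/2) :
    (twogrid n (jacobi n ω₁ * jacobi n ω₂)).mulVec (vmode n k + vmode n (n-1-k)) =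
      (1 - 2 * (ω₁ + ω₂) * (Real.sin (theta n k) ^ 4 + Real.cos (theta n k) ^ 4)
         + 4 * ω₁ * ω₂ * (Real.sin (theta n k) ^ 6 + Real.cos (theta n k) ^ 6)) •
        (vmode n k + vmode n (n-1-k)) := by
  have hn' : (3:ℝ) ≤ (n:ℝ) := by exact_mod_cast hn
  have hN : (0:ℝ) < (n:ℝ) - 1 := by linarith
  have hk : k ≤ n - 1 := by omega
  have hpy := Real.sin_sq_add_cos_sq (theta n k)
  set s := Real.sin (theta n k) with hs
  set c := Real.cos (theta n k) with hc
  -- positivity of s and c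
  have hθpos : 0 < theta n k := by
    rw [theta]
    have : (0:ℝ) < (k:ℝ) := by exact_mod_cast hk1
    positivity
  have hθlt : theta n k < Real.pi / 2 := by
    rw [theta]
    rw [div_lt_div_iff₀ (by linarith) (by norm_num)]
    have hk2' : (k:ℝ) ≤ ((n:ℝ)-1)/2 := by
      have h2k : 2 * k ≤ n - 1 := by omega
      have : ((2*k : ℕ):ℝ) ≤ ((n-1 : ℕ):ℝ) := by exact_mod_cast h2k
      rw [Nat.cast_sub (by omega : 1 ≤ n)] at this
      push_cast at this ⊢
      linarith
    have hpi := Real.pi_pos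
    nlinarith
  have hs0 : 0 < s := Real.sin_pos_of_pos_of_lt_pi hθpos (by linarith [Real.pi_pos])
  have hc0 : 0 < c := Real.cos_pos_of_mem_Ioo ⟨by linarith [Real.pi_pos], hθlt⟩
  set a := (1 - 2*ω₁*s^2) * (1 - 2*ω₂*s^2) with ha
  set b := (1 - 2*ω₁*c^2) * (1 - 2*ω₂*c^2) with hb
  set v := vmode n k with hv
  set v' := vmode n (n-1-k) with hv'
  set w := vcoarse n k with hw
  have hS : (jacobi n ω₁ * jacobi n ω₂) *ᵥ (v + v') = a • v + b • v' := by
    rw [← Matrix.mulVec_mulVec, Matrix.mulVec_add, hv, hv', jacobi_mulVec n hn ω₂ k,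
      jacobi_mulVec n hn ω₂ (n-1-k), Matrix.mulVec_add, Matrix.mulVec_smul, Matrix.mulVec_smul,
      jacobi_mulVec n hn ω₁ k, jacobi_mulVec n hn ω₁ (n-1-k),
      sin_theta_compl n k hn hk, smul_smul, smul_smul]
    rw [ha, hb, ← hs, ← hc]
    ring_nf
  have hlapS : lap n *ᵥ (a • v + b • v')
      = (a * (4*((n:ℝ)-1)^2*s^2)) • v + (b * (4*((n:ℝ)-1)^2*c^2)) • v' := by
    rw [Matrix.mulVec_add, Matrix.mulVec_smul, Matrix.mulVec_smul, hv, hv',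
      lap_mulVec n hn k, lap_mulVec n hn (n-1-k), lamk_eq, lamk_compl n k hn hk,
      smul_smul, smul_smul, ← hs, ← hc]
    try ring_nf
  have hPT : (interp n)ᵀ *ᵥ ((a * (4*((n:ℝ)-1)^2*s^2)) • v + (b * (4*((n:ℝ)-1)^2*c^2)) • v')
      = ((8*((n:ℝ)-1)^2*s^2*c^2) * (a - b)) • w := by
    rw [Matrix.mulVec_add, Matrix.mulVec_smul, Matrix.mulVec_smul, hv, hv',
      interpT_mulVec n hn k, interpT_mulVec n hn (n-1-k), cos_theta_compl n k hn hk,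
      vcoarse_compl n k hn hk, ← hs, ← hc, ← hw, smul_smul, smul_smul]
    funext j
    simp only [Pi.add_apply, Pi.smul_apply, Pi.neg_apply, smul_eq_mul]
    ring
  have hCw : coarseA n *ᵥ w = (8*((n:ℝ)-1)^2*s^2*c^2) • w := by
    rw [hw, coarseA_mulVec n k hn hodd hk, ← hs, ← hc]
  have hinv : (coarseA n)⁻¹ *ᵥ (((8*((n:ℝ)-1)^2*s^2*c^2) * (a - b)) • w) = (a - b) • w :=
    inv_mulVec_eig (coarseA n) (coarseA_isUnit n hn) hCw
  have hP : interp n *ᵥ ((a - b) • w)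
      = ((a-b) * c^2) • v - ((a-b) * s^2) • v' := by
    rw [Matrix.mulVec_smul, hw, interp_mulVec n k hn hodd hk, ← hs, ← hc, ← hv, ← hv']
    funext i
    simp only [Pi.sub_apply, Pi.smul_apply, smul_eq_mul]
    ring
  -- assemble
  rw [twogrid, ← Matrix.mulVec_mulVec, hS, Matrix.sub_mulVec, Matrix.one_mulVec]
  rw [← Matrix.mulVec_mulVec, ← Matrix.mulVec_mulVec, ← Matrix.mulVec_mulVec,
    hlapS, hPT, hinv, hP]
  have e1 : a - (a-b)*c^2 = (1 - 2 * (ω₁ + ω₂) * (s ^ 4 + c ^ 4)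
      + 4 * ω₁ * ω₂ * (s ^ 6 + c ^ 6)) := by
    rw [ha, hb]
    linear_combination (1 - (1 - 2*ω₁*s^2) * (1 - 2*ω₂*s^2)) * hpy
  have e2 : b + (a-b)*s^2 = (1 - 2 * (ω₁ + ω₂) * (s ^ 4 + c ^ 4)
      + 4 * ω₁ * ω₂ * (s ^ 6 + c ^ 6)) := by
    rw [ha, hb]
    linear_combination (1 - (1 - 2*ω₁*c^2) * (1 - 2*ω₂*c^2)) * hpy
  funext i
  simp only [Pi.add_apply, Pi.sub_apply, Pi.smul_apply, smul_eq_mul]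
  linear_combination (v i) * e1 + (v' i) * e2
end
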